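/- arXiv:1208.1023 — 5 statements merged into one kernel-verified Lean document; each statement's English description precedes it below -/
import Mathlib

section
/- Let λ₁, λ₂, λ₃ be positive reals with sum L, and suppose {λ₁, λ₂, λ₃} is linearly independent over ℚ. Then the element L ∧ (λ₁ - λ₃) - λ₁ ∧ λ₃ of ℝ ∧_ℚ ℝ does not belong to the subspace K(L) = { L ∧ u : u ∈ ℝ }. (This is the SAF invariant of the 3-IET with permutation (321); hence such a 3-IET does not lie in the subgroup generated by periodic IETs and rotations.) -/
open TensorProduct

/-- The wedge product `u ∧ v := u ⊗ v - v ⊗ u` inside `ℝ ⊗[ℚ] ℝ`,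
representing the exterior square `ℝ ∧_ℚ ℝ`. -/
noncomputable def wedge (u v : ℝ) : ℝ ⊗[ℚ] ℝ := u ⊗ₜ[ℚ] v - v ⊗ₜ[ℚ] u

/-- The ℚ-linear map `v ↦ u ∧ v`. -/
noncomputable def wedgeMap (u : ℝ) : ℝ →ₗ[ℚ] ℝ ⊗[ℚ] ℝ where
  toFun v := wedge u v
  map_add' x y := by simp [wedge, tmul_add, add_tmul]; abel
  map_smul' q x := by simp [wedge, tmul_smul, smul_tmul', smul_sub]

noncomputable def Tmap (f : ℝ →ₗ[ℚ] ℚ) : ℝ ⊗[ℚ] ℝ →ₗ[ℚ] ℝ :=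
  TensorProduct.lift ((LinearMap.lsmul ℚ ℝ) ∘ₗ f)

lemma Tmap_wedge (f : ℝ →ₗ[ℚ] ℚ) (a b : ℝ) :
    Tmap f (wedge a b) = f a • b - f b • a := by
  simp [Tmap, wedge]

theorem stmt_5 (l₁ l₂ l₃ L : ℝ) (h₁ : 0 < l₁) (h₂ : 0 < l₂) (h₃ : 0 < l₃)
    (hL : l₁ + l₂ + l₃ = L) (hind : LinearIndependent ℚ ![l₁, l₂, l₃]) :
    wedge L (l₁ - l₃) - wedge l₁ l₃ ∉ {z : ℝ ⊗[ℚ] ℝ | ∃ u : ℝ, z = wedge L u} := by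
  rintro ⟨u, hu⟩
  classical
  set v : Fin 3 → ℝ := ![l₁, l₂, l₃] with hv
  obtain ⟨G, hG⟩ := (Finsupp.linearCombination ℚ v).exists_leftInverse_of_injective
    (LinearMap.ker_eq_bot.mpr hind)
  set F : Fin 3 → (ℝ →ₗ[ℚ] ℚ) :=
    fun j => (Finsupp.lapply j : (Fin 3 →₀ ℚ) →ₗ[ℚ] ℚ) ∘ₗ G with hFdef
  have hF : ∀ j i, F j (v i) = if i = j then 1 else 0 := by
    intro j i
    have h1 : v i = Finsupp.linearCombination ℚ v (Finsupp.single i 1) := by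
      simp
    have h2 := LinearMap.congr_fun hG (Finsupp.single i 1)
    simp only [LinearMap.comp_apply, LinearMap.id_apply] at h2
    rw [hFdef]
    simp only [LinearMap.comp_apply]
    have h1' : Finsupp.linearCombination ℚ v (Finsupp.single i 1) = v i := by simp
    rw [← h1', h2, Finsupp.lapply_apply, Finsupp.single_apply]
  have hl1 : v 0 = l₁ := rfl
  have hl2 : v 1 = l₂ := rfl
  have hl3 : v 2 = l₃ := rfl
  -- values of functionals
  have hf := fun i => hF 2 i
  have hg := fun i => hF 0 i
  -- apply Tmap (F 2) and Tmap (F 0)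
  have key : ∀ j : Fin 3,
      (F j L : ℚ) • (l₁ - l₃) - (F j (l₁ - l₃)) • L - ((F j l₁) • l₃ - (F j l₃) • l₁)
        = (F j L) • u - (F j u) • L := by
    intro j
    have := congrArg (Tmap (F j)) hu
    simpa [map_sub, Tmap_wedge, sub_sub] using this
  have hfl1 : F 2 l₁ = 0 := by simpa [hl1] using hf 0
  have hfl2 : F 2 l₂ = 0 := by simpa [hl2] using hf 1
  have hfl3 : F 2 l₃ = 1 := by simpa [hl3] using hf 2
  have hgl1 : F 0 l₁ = 1 := by simpa [hl1] using hg 0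
  have hgl2 : F 0 l₂ = 0 := by simpa [hl2] using hg 1
  have hgl3 : F 0 l₃ = 0 := by simpa [hl3] using hg 2
  have hfL : F 2 L = 1 := by rw [← hL]; simp [hfl1, hfl2, hfl3]
  have hgL : F 0 L = 1 := by rw [← hL]; simp [hgl1, hgl2, hgl3]
  have e1 := key 2
  have e2 := key 0
  rw [map_sub, hfL, hfl1, hfl3] at e1
  rw [map_sub, hgL, hgl1, hgl3] at e2
  simp only [one_smul, zero_smul, zero_sub, sub_zero, sub_neg_eq_add] at e1 e2
  set r : ℚ := F 0 u - F 2 u with hr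
  have hreal : l₁ + l₃ + 2 * L = (r : ℝ) * L := by
    simp only [Rat.smul_def] at e1 e2
    push_cast at e1 e2
    push_cast [hr]
    linarith [e1, e2]
  -- now derive contradiction from linear independence
  have hc := (Fintype.linearIndependent_iff.mp hind) ![3 - r, 2 - r, 3 - r]
  have hsum : ∑ i, (![3 - r, 2 - r, 3 - r] i) • (![l₁, l₂, l₃] i) = 0 := by
    rw [Fin.sum_univ_three]
    simp only [Matrix.cons_val_zero, Matrix.cons_val_one, Matrix.head_cons,
      Matrix.cons_val_two, Matrix.tail_cons]
    rw [Rat.smul_def, Rat.smul_def, Rat.smul_def]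
    push_cast
    have : L = l₁ + l₂ + l₃ := hL.symm
    rw [this] at hreal
    ring_nf
    ring_nf at hreal
    linarith [hreal]
  have c1 := hc hsum 1
  have c0 := hc hsum 0
  simp at c1 c0
  linarith [c0, c1]
end

section
/- Let λ₁, λ₂, λ₃ be positive reals summing to L. The element S = L ∧ (λ₁ - λ₃) - λ₁ ∧ λ₃ of ℝ ∧_ℚ ℝ lies in K(L) = { L ∧ u : u ∈ ℝ } if and only if {λ₁, λ₂, λ₃} is linearly dependent over ℚ. (Criterion for a 3-IET to lie in the subgroup generated by periodic IETs and rotations.) -/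
open TensorProduct

lemma wedge_smul_right (q : ℚ) (x y : ℝ) : wedge x (q • y) = q • wedge x y := by
  simp [wedge, tmul_smul, smul_tmul', smul_sub]

lemma wedge_smul_left (q : ℚ) (x y : ℝ) : wedge (q • x) y = q • wedge x y := by
  simp [wedge, tmul_smul, smul_tmul', smul_sub]

lemma wedge_add_left (x y z : ℝ) : wedge (x + y) z = wedge x z + wedge y z := by
  simp only [wedge, add_tmul, tmul_add]; abel

lemma wedge_self (x : ℝ) : wedge x x = 0 := by simp [wedge]

lemma wedge_neg_left (x y : ℝ) : wedge (-x) y = - wedge x y := by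
  simp only [wedge, neg_tmul, tmul_neg]; abel

lemma wedge_neg_right (x y : ℝ) : wedge x (-y) = - wedge x y := by
  simp only [wedge, neg_tmul, tmul_neg]; abel

lemma wedge_zero_right (x : ℝ) : wedge x 0 = 0 := by simp [wedge]

lemma wedge_antisymm (x y : ℝ) : wedge x y = - wedge y x := by
  simp only [wedge]; abel

lemma wedge_sub_right (x y z : ℝ) : wedge x (y - z) = wedge x y - wedge x z :=
  map_sub (wedgeMap x) y z

noncomputable def phi (f : ℝ →ₗ[ℚ] ℚ) : ℝ ⊗[ℚ] ℝ →ₗ[ℚ] ℝ :=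
  (TensorProduct.lid ℚ ℝ).toLinearMap ∘ₗ (f.rTensor ℝ)

lemma phi_wedge (f : ℝ →ₗ[ℚ] ℚ) (x y : ℝ) : phi f (wedge x y) = f x • y - f y • x := by
  simp only [phi, wedge, LinearMap.comp_apply, map_sub, LinearMap.rTensor_tmul,
    LinearEquiv.coe_coe, lid_tmul]

noncomputable def psi (f g : ℝ →ₗ[ℚ] ℚ) : ℝ ⊗[ℚ] ℝ →ₗ[ℚ] ℚ :=
  (TensorProduct.lid ℚ ℚ).toLinearMap ∘ₗ (TensorProduct.map f g)

lemma psi_wedge (f g : ℝ →ₗ[ℚ] ℚ) (x y : ℝ) :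
    psi f g (wedge x y) = f x * g y - f y * g x := by
  simp only [psi, wedge, LinearMap.comp_apply, map_sub, TensorProduct.map_tmul,
    LinearEquiv.coe_coe, lid_tmul, smul_eq_mul]

lemma exists_coord (v : Fin 3 → ℝ) (h : LinearIndependent ℚ v) (i : Fin 3) :
    ∃ f : ℝ →ₗ[ℚ] ℚ, ∀ j, f (v j) = if j = i then 1 else 0 := by
  have hs : LinearIndepOn ℚ id (Set.range v) := (linearIndepOn_id_range_iff h.injective).mpr h
  let B := Module.Basis.extend hs
  have hmem : ∀ j, v j ∈ hs.extend (Set.subset_univ _) := fun j =>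
    Module.Basis.subset_extend hs ⟨j, rfl⟩
  refine ⟨B.coord ⟨v i, hmem i⟩, fun j => ?_⟩
  have hj : B ⟨v j, hmem j⟩ = v j := Module.Basis.extend_apply_self hs ⟨v j, hmem j⟩
  rw [← hj, Module.Basis.coord_apply, Module.Basis.repr_self, Finsupp.single_apply]
  by_cases hij : j = i
  · subst hij; simp
  · rw [if_neg, if_neg hij]
    intro he
    exact hij (h.injective (by simpa using congrArg Subtype.val he))

theorem stmt_8 (l₁ l₂ l₃ L : ℝ) (h₁ : 0 < l₁) (h₂ : 0 < l₂) (h₃ : 0 < l₃)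
    (hL : l₁ + l₂ + l₃ = L) :
    (∃ u : ℝ, wedge L (l₁ - l₃) - wedge l₁ l₃ = wedge L u) ↔
      ¬ LinearIndependent ℚ ![l₁, l₂, l₃] := by
  constructor
  · rintro ⟨u, hu⟩ hind
    have key : wedge l₁ l₃ = wedge L (l₁ - l₃ - u) := by
      rw [wedge_sub_right, ← hu]; abel
    obtain ⟨fa, hfa⟩ := exists_coord ![l₁, l₂, l₃] hind 0
    obtain ⟨fb, hfb⟩ := exists_coord ![l₁, l₂, l₃] hind 1
    obtain ⟨fc, hfc⟩ := exists_coord ![l₁, l₂, l₃] hind 2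
    have ha1 : fa l₁ = 1 := by simpa using hfa 0
    have ha3 : fa l₃ = 0 := by simpa using hfa 2
    have hb1 : fb l₁ = 0 := by simpa using hfb 0
    have hb2 : fb l₂ = 1 := by simpa using hfb 1
    have hb3 : fb l₃ = 0 := by simpa using hfb 2
    have hc1 : fc l₁ = 0 := by simpa using hfc 0
    have hc3 : fc l₃ = 1 := by simpa using hfc 2
    have hbL : fb L = 1 := by rw [← hL]; simp [map_add, hb1, hb2, hb3]
    set v : ℝ := l₁ - l₃ - u with hv
    have h3 := congrArg (phi fb) key
    rw [phi_wedge, phi_wedge, hb1, hb3, hbL] at h3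
    have hveq : v = fb v • L := by
      have : (0 : ℝ) = v - fb v • L := by simpa using h3
      linarith [this]
    rw [hveq, wedge_smul_right, wedge_self, smul_zero] at key
    have h4 := congrArg (psi fa fc) key
    rw [psi_wedge, map_zero, ha1, ha3, hc1, hc3] at h4
    norm_num at h4
  · intro hind
    obtain ⟨g, hsum, i, hgi⟩ := Fintype.not_linearIndependent_iff.mp hind
    simp only [Fin.sum_univ_three, Matrix.cons_val_zero, Matrix.cons_val_one,
      Matrix.head_cons, Matrix.cons_val_two, Matrix.tail_cons] at hsum
    have hL0 : (0 : ℝ) < L := by linarith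
    suffices h : ∃ w : ℝ, wedge l₁ l₃ = wedge L w by
      obtain ⟨w, hw⟩ := h
      exact ⟨l₁ - l₃ - w, by rw [wedge_sub_right L (l₁ - l₃) w, hw]⟩
    by_cases hg1 : g 1 = 0
    · have hrel : g 0 • l₁ + g 2 • l₃ = 0 := by
        rw [hg1] at hsum; simpa using hsum
      have hne : g 0 ≠ 0 ∨ g 2 ≠ 0 := by fin_cases i <;> simp_all
      have hzero : wedge l₁ l₃ = 0 := by
        rcases hne with h0 | h2
        · have hx : g 0 • l₁ = -(g 2 • l₃) := eq_neg_of_add_eq_zero_left hrel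
          have : g 0 • wedge l₁ l₃ = 0 := by
            rw [← wedge_smul_left, hx, wedge_neg_left, wedge_smul_left, wedge_self,
              smul_zero, neg_zero]
          exact (smul_eq_zero.mp this).resolve_left h0
        · have hx : g 2 • l₃ = -(g 0 • l₁) := eq_neg_of_add_eq_zero_right hrel
          have : g 2 • wedge l₁ l₃ = 0 := by
            rw [← wedge_smul_right, hx, wedge_neg_right, wedge_smul_right, wedge_self,
              smul_zero, neg_zero]
          exact (smul_eq_zero.mp this).resolve_left h2
      exact ⟨0, by rw [hzero, wedge_zero_right]⟩
    · have hsum' : (g 0 : ℝ) * l₁ + (g 1 : ℝ) * l₂ + (g 2 : ℝ) * l₃ = 0 := by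
        simpa [Rat.smul_def] using hsum
      have hexp : (g 1 : ℚ) • L = (g 1 - g 0) • l₁ + (g 1 - g 2) • l₃ := by
        simp only [Rat.smul_def]
        push_cast
        linear_combination (g 1 : ℝ) * hL.symm + hsum'
      have hkey : (g 1 : ℚ) • wedge L l₃ = (g 1 - g 0) • wedge l₁ l₃ := by
        rw [← wedge_smul_left, hexp, wedge_add_left, wedge_smul_left, wedge_smul_left,
          wedge_self, smul_zero, add_zero]
      by_cases hd : g 1 - g 0 = 0
      · have hd2 : g 1 - g 2 ≠ 0 := by
          intro h'
          rw [hd, h', zero_smul, zero_smul, add_zero] at hexp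
          rcases smul_eq_zero.mp hexp with h'' | h''
          · exact hg1 h''
          · linarith
        have hexp' : (g 1 : ℚ) • L = (g 1 - g 2) • l₃ := by
          rw [hexp, hd, zero_smul, zero_add]
        have hl₃ : l₃ = ((g 1 - g 2)⁻¹ * g 1) • L := by
          rw [mul_smul, hexp', inv_smul_smul₀ hd2]
        refine ⟨-(((g 1 - g 2)⁻¹ * g 1) • l₁), ?_⟩
        calc wedge l₁ l₃ = wedge l₁ (((g 1 - g 2)⁻¹ * g 1) • L) := by rw [← hl₃]
          _ = ((g 1 - g 2)⁻¹ * g 1) • wedge l₁ L := wedge_smul_right _ _ _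
          _ = ((g 1 - g 2)⁻¹ * g 1) • (- wedge L l₁) := by rw [← wedge_antisymm]
          _ = wedge L (-(((g 1 - g 2)⁻¹ * g 1) • l₁)) := by
              rw [wedge_neg_right, wedge_smul_right, smul_neg]
      · have hmain : wedge l₁ l₃ = ((g 1 - g 0)⁻¹ * g 1) • wedge L l₃ := by
          rw [mul_smul, hkey, inv_smul_smul₀ hd]
        exact ⟨((g 1 - g 0)⁻¹ * g 1) • l₃, by rw [hmain, ← wedge_smul_right]⟩
end

section
/- Let K ⊂ ℝ be a real quadratic field (a ℚ-subspace of dimension 2 that is a subfield). Let S ∈ K ∧ K ⊆ ℝ ∧_ℚ ℝ with S ≠ 0, and let Y be a positive real with Y ∉ K. Then S ∉ K(Y) = { Y ∧ w : w ∈ ℝ }. (Hence the IET induced on a subinterval of length Y ∉ K does not lie in G₁.) -/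
open TensorProduct

theorem stmt_11 (K : IntermediateField ℚ ℝ) (hK : Module.finrank ℚ K = 2)
    (S : ℝ ⊗[ℚ] ℝ)
    (hS : S ∈ Submodule.span ℚ
      {z : ℝ ⊗[ℚ] ℝ | ∃ a ∈ K, ∃ b ∈ K, z = wedge a b})
    (hS0 : S ≠ 0) (Y : ℝ) (hY : 0 < Y) (hYK : Y ∉ K) :
    ∀ w : ℝ, S ≠ wedge Y w := by
  intro w hSw
  -- the submodule underlying K
  set M : Submodule ℚ ℝ := Subalgebra.toSubmodule K.toSubalgebra with hM
  have hYM : Y ∉ M := hYK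
  -- quotient map
  have hπY : M.mkQ Y ≠ 0 := by
    simpa [Submodule.Quotient.mk_eq_zero] using hYM
  -- a functional on the quotient not vanishing on Y
  have : ¬ ∀ g : Module.Dual ℚ (ℝ ⧸ M), g (M.mkQ Y) = 0 := by
    rw [Module.forall_dual_apply_eq_zero_iff]
    exact hπY
  obtain ⟨g, hg⟩ := not_forall.mp this
  set f : ℝ →ₗ[ℚ] ℚ := g ∘ₗ M.mkQ with hf
  have hfK : ∀ a : ℝ, a ∈ K → f a = 0 := by
    intro a ha
    have : M.mkQ a = 0 := (Submodule.Quotient.mk_eq_zero M).mpr ha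
    simp [hf, this]
  have hfY : f Y ≠ 0 := hg
  -- the map ℝ ⊗ ℝ → ℝ, a ⊗ b ↦ f a • b
  set φ : ℝ ⊗[ℚ] ℝ →ₗ[ℚ] ℝ :=
    TensorProduct.lift ((LinearMap.lsmul ℚ ℝ).comp f) with hφ
  have hφtmul : ∀ a b : ℝ, φ (a ⊗ₜ[ℚ] b) = f a • b := by
    intro a b; simp [hφ]
  have hφS : φ S = 0 := by
    refine Submodule.span_induction ?_ ?_ ?_ ?_ hS
    · rintro z ⟨a, ha, b, hb, rfl⟩
      simp [wedge, map_sub, hφtmul, hfK a ha, hfK b hb]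
    · simp
    · intro x y _ _ hx hy; simp [map_add, hx, hy]
    · intro q x _ hx; simp [map_smul, hx]
  -- evaluate φ on wedge Y w
  have h1 : f Y • w - f w • Y = 0 := by
    have := hφS
    rw [hSw] at this
    simpa [wedge, map_sub, hφtmul] using this
  have hw : w = ((f Y)⁻¹ * f w) • Y := by
    have h2 : f Y • w = f w • Y := by linarith [sub_eq_zero.mp h1]
    have : ((f Y)⁻¹ : ℚ) • (f Y • w) = ((f Y)⁻¹ : ℚ) • (f w • Y) := by rw [h2]
    rw [smul_smul, smul_smul, inv_mul_cancel₀ hfY, one_smul] at this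
    simpa [smul_smul] using this
  apply hS0
  rw [hSw, hw]
  have : wedge Y (((f Y)⁻¹ * f w) • Y) = wedgeMap Y (((f Y)⁻¹ * f w) • Y) := rfl
  rw [this, map_smul]
  have : wedgeMap Y Y = 0 := by simp [wedgeMap, wedge]
  rw [this, smul_zero]
end

section
/- Let α be irrational with 0 < α < 1. Then the element 1 ∧ α of ℝ ∧_ℚ ℝ is nonzero. (Hence the SAF invariant of an irrational rotation is nonzero, so irrational rotations do not belong to the group generated by periodic IETs.) -/
open TensorProduct

/-- If `α` is irrational, then `1` and `α` are ℚ-linearly independent. -/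
lemma li_one_alpha (α : ℝ) (hirr : Irrational α) :
    LinearIndependent ℚ ((↑) : ({1, α} : Set ℝ) → ℝ) := by
  have li2 : LinearIndependent ℚ ![(1:ℝ), α] := by
    rw [LinearIndependent.pair_iff]
    intro s t h
    rcases eq_or_ne t 0 with ht | ht
    · subst ht
      simp only [smul_zero, zero_smul, add_zero, Rat.smul_one_eq_cast] at h
      norm_cast at h
    · exfalso
      apply hirr
      refine ⟨-s / t, ?_⟩
      have htR : (t:ℝ) ≠ 0 := by exact_mod_cast ht
      rw [Rat.smul_def, Rat.smul_def] at h
      push_cast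
      field_simp
      linarith
  have h2 : LinearIndependent ℚ ((↑) : Set.range ![(1:ℝ), α] → ℝ) := li2.linearIndepOn_id
  have hr : Set.range ![(1:ℝ), α] = {1, α} := by
    simp [Matrix.range_cons, Matrix.range_empty, Set.pair_comm]
  rwa [hr] at h2

theorem stmt_15 (α : ℝ) (hirr : Irrational α) (h0 : 0 < α) (h1 : α < 1) :
    wedge 1 α ≠ 0 := by
  have li : LinearIndepOn ℚ id ({1, α} : Set ℝ) := li_one_alpha α hirr
  have hsub : ({1, α} : Set ℝ) ⊆ li.extend (Set.subset_univ _) :=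
    li.subset_extend _
  let b : Module.Basis _ ℚ ℝ := Module.Basis.extend li
  have hm1 : (1:ℝ) ∈ li.extend (Set.subset_univ _) := hsub (by simp)
  have hmα : α ∈ li.extend (Set.subset_univ _) := hsub (by simp)
  have hne : (⟨1, hm1⟩ : li.extend (Set.subset_univ _)) ≠ ⟨α, hmα⟩ := by
    intro h
    exact hirr ⟨1, by simpa using congrArg Subtype.val h⟩
  set f := b.coord ⟨1, hm1⟩ with hf
  set g := b.coord ⟨α, hmα⟩ with hg
  have hb1 : b ⟨1, hm1⟩ = (1:ℝ) := Module.Basis.extend_apply_self li ⟨1, hm1⟩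
  have hbα : b ⟨α, hmα⟩ = α := Module.Basis.extend_apply_self li ⟨α, hmα⟩
  have e1 : f (b ⟨1, hm1⟩) = 1 := by
    simp [hf, Module.Basis.coord_apply, Module.Basis.repr_self]
  have e2 : f (b ⟨α, hmα⟩) = 0 := by
    simp [hf, Module.Basis.coord_apply, Module.Basis.repr_self, Finsupp.single_apply, Ne.symm hne]
  have e3 : g (b ⟨1, hm1⟩) = 0 := by
    simp [hg, Module.Basis.coord_apply, Module.Basis.repr_self, Finsupp.single_apply, hne]
  have e4 : g (b ⟨α, hmα⟩) = 1 := by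
    simp [hg, Module.Basis.coord_apply, Module.Basis.repr_self]
  rw [hb1] at e1 e3
  rw [hbα] at e2 e4
  intro hzero
  rw [wedge] at hzero
  have hmap := congrArg (TensorProduct.map f g) hzero
  simp only [map_sub, TensorProduct.map_tmul, map_zero, e1, e2, e3, e4,
    TensorProduct.zero_tmul, TensorProduct.tmul_zero, sub_zero] at hmap
  have h2 : ((TensorProduct.lid ℚ ℚ) ((1:ℚ) ⊗ₜ[ℚ] (1:ℚ)) : ℚ) = (TensorProduct.lid ℚ ℚ) 0 := by
    rw [hmap]
  rw [LinearEquiv.map_zero, TensorProduct.lid_tmul] at h2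
  norm_num at h2
end

section
/- Suppose v₁, …, vₙ are ℚ-linearly independent reals with v₁ = L, and S = Σ_{1≤i<j≤n} p_{ij} v_i ∧ v_j with p_{ij} ∈ ℚ. Then S ∈ K(L) = { L ∧ u : u ∈ ℝ } if and only if p_{ij} = 0 for all 2 ≤ i < j ≤ n. -/
open TensorProduct

theorem stmt_17 {n : ℕ} (v : Fin n → ℝ) (hv : LinearIndependent ℚ v)
    (L : ℝ) (h0 : 0 < n) (hL : v ⟨0, h0⟩ = L)
    (p : Fin n → Fin n → ℚ) (S : ℝ ⊗[ℚ] ℝ)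
    (hS : S = ∑ i : Fin n, ∑ j : Fin n,
        if i < j then p i j • wedge (v i) (v j) else 0) :
    (∃ u : ℝ, S = wedge L u) ↔
      ∀ i j : Fin n, (⟨0, h0⟩ : Fin n) < i → i < j → p i j = 0 := by
  set i0 : Fin n := ⟨0, h0⟩ with hi0
  have hvinj : Function.Injective v := hv.injective
  have hv' : LinearIndepOn ℚ id (Set.range v) := hv.linearIndepOn_id
  set B : Module.Basis _ ℚ ℝ := Module.Basis.extend hv' with hB
  have he : ∀ i, v i ∈ hv'.extend (Set.subset_univ (Set.range v)) :=
    fun i => hv'.subset_extend _ ⟨i, rfl⟩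
  set e : Fin n → hv'.extend (Set.subset_univ (Set.range v)) :=
    fun i => ⟨v i, he i⟩ with heq
  have heinj : Function.Injective e := by
    intro a b h
    exact hvinj (congrArg Subtype.val h)
  have hBe : ∀ i, B (e i) = v i := fun i => Module.Basis.extend_apply_self hv' (e i)
  have hrepr : ∀ k i, B.repr (v k) (e i) = if k = i then 1 else 0 := by
    intro k i
    rw [← hBe k, B.repr_self]
    simp [Finsupp.single_apply, heinj.eq_iff]
  set T := Module.Basis.tensorProduct B B with hT
  have hw : ∀ k l i j, T.repr (wedge (v k) (v l)) (e i, e j) =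
      (if k = i then 1 else 0) * (if l = j then 1 else 0)
        - (if l = i then 1 else 0) * (if k = j then 1 else 0) := by
    intro k l i j
    simp only [wedge, hT, map_sub, Finsupp.coe_sub, Pi.sub_apply,
      Module.Basis.tensorProduct_repr_tmul_apply, hrepr]
    split_ifs <;> simp
  constructor
  · rintro ⟨u, rfl⟩ i j h0i hij
    have hL1 : B.repr L (e i) = 0 := by
      rw [← hL, hrepr]
      simp [h0i.ne]
    have hL2 : B.repr L (e j) = 0 := by
      rw [← hL, hrepr]
      simp [(h0i.trans hij).ne]
    have key : T.repr (wedge L u) (e i, e j) = 0 := by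
      simp [wedge, hT, Module.Basis.tensorProduct_repr_tmul_apply, hL1, hL2]
    have key2 : T.repr (wedge L u) (e i, e j) = p i j := by
      rw [hS]
      rw [map_sum]
      rw [Finsupp.coe_finset_sum, Finset.sum_apply]
      have hterm : ∀ k l : Fin n,
          T.repr (if k < l then p k l • wedge (v k) (v l) else 0) (e i, e j)
            = if k = i ∧ l = j then p i j else 0 := by
        intro k l
        by_cases hkl : k < l
        · rw [if_pos hkl, map_smul, Finsupp.smul_apply, hw]
          by_cases hk : k = i
          · by_cases hl : l = j
            · subst hk; subst hl
              simp [hij.ne, hij.ne']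
            · subst hk
              simp [hl, hij.ne]
          · have hcross : ¬(l = i ∧ k = j) := by
              rintro ⟨rfl, rfl⟩
              exact absurd (hkl.trans hij) (lt_irrefl _)
            by_cases hl : l = i
            · have hk' : k ≠ j := fun h => hcross ⟨hl, h⟩
              simp [hk, hl, hk']
            · simp [hk, hl]
        · rw [if_neg hkl]
          have : ¬(k = i ∧ l = j) := by
            rintro ⟨rfl, rfl⟩; exact hkl hij
          simp [this]
      calc (∑ k : Fin n, (T.repr (∑ l : Fin n,
              if k < l then p k l • wedge (v k) (v l) else 0)) (e i, e j))
          = ∑ k : Fin n, ∑ l : Fin n,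
              (T.repr (if k < l then p k l • wedge (v k) (v l) else 0)) (e i, e j) := by
            refine Finset.sum_congr rfl fun k _ => ?_
            rw [map_sum, Finsupp.coe_finset_sum, Finset.sum_apply]
        _ = ∑ k : Fin n, ∑ l : Fin n, if k = i ∧ l = j then p i j else 0 := by
            refine Finset.sum_congr rfl fun k _ => Finset.sum_congr rfl fun l _ => hterm k l
        _ = p i j := by
            simp [ite_and, Finset.sum_ite_eq']
    rw [key2] at key
    exact key
  · intro hp
    refine ⟨∑ j : Fin n, p i0 j • v j, ?_⟩
    have hmap : wedge L (∑ j : Fin n, p i0 j • v j)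
        = ∑ j : Fin n, p i0 j • wedge L (v j) := by
      rw [show wedge L (∑ j : Fin n, p i0 j • v j) = wedgeMap L (∑ j : Fin n, p i0 j • v j) from rfl,
        map_sum]
      simp [wedgeMap]
    rw [hS, hmap]
    have hwz : wedge L L = 0 := by simp [wedge]
    rw [Finset.sum_eq_single i0]
    · refine Finset.sum_congr rfl fun j _ => ?_
      by_cases hj : i0 < j
      · rw [if_pos hj, hL]
      · have hj0 : j = i0 := by
          refine Fin.ext ?_
          have h1 := Fin.lt_def.not.mp hj
          have h2 : (i0 : ℕ) = 0 := rfl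
          omega
        subst hj0
        rw [if_neg hj, hL, hwz, smul_zero]
    · intro i _ hi
      have hi' : i0 < i := Fin.lt_def.mpr (Nat.pos_of_ne_zero fun h => hi (Fin.ext h))
      refine Finset.sum_eq_zero fun j _ => ?_
      by_cases hj : i < j
      · rw [if_pos hj, hp i j hi' hj, zero_smul]
      · rw [if_neg hj]
    · intro h; exact absurd (Finset.mem_univ i0) h
end
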